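/- arXiv:1008.1703 — 7 statements merged into one kernel-verified Lean document; each statement's English description precedes it below -/
import Mathlib

section
/- For a subset A of X = {1,...,n} with 1 < k < n, the hyperplane H_A defined by the equation ∑_{i∈A} x_i = 1 defines a split of the hypersimplex Δ(k,n) (i.e., a subdivision with exactly two maximal cells) if and only if 2 ≤ |A| ≤ n − k. Otherwise H_A induces the trivial subdivision of Δ(k,n). -/
/-- A point in the relative interior of the hypersimplex Δ(k,n). -/
def relintHS (k n : ℕ) (x : Fin n → ℝ) : Prop :=
  (∀ i, 0 < x i ∧ x i < 1) ∧ ∑ i, x i = (k : ℝ)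

/-- The hyperplane `H_A = {x : ∑_{i∈A} x_i = 1}` defines a split of the hypersimplex
Δ(k,n): it meets the relative interior and does not separate any edge of Δ(k,n).
Edges of Δ(k,n) connect vertices (k-subsets) differing by exchanging one element;
the hyperplane separates such an edge iff the vertex sums |A∩K| lie strictly on
opposite sides of 1. -/
def definesSplitHS (k n : ℕ) (A : Finset (Fin n)) : Prop :=
  (∃ x : Fin n → ℝ, relintHS k n x ∧ ∑ i ∈ A, x i = 1) ∧
  ∀ K L : Finset (Fin n), K.card = k → L.card = k →
    (K \ L).card = 1 → (L \ K).card = 1 →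
    ¬(((A ∩ K).card : ℝ) < 1 ∧ (1 : ℝ) < ((A ∩ L).card : ℝ))

/-! Along an edge `K → L` of `Δ(k,n)` the count `#(A ∩ K)` grows by at most one, so it never jumps
over `1`: no `H_A` separates an edge, and `H_A` splits `Δ(k,n)` exactly when it meets the relative
interior. There `∑_{A} xᵢ = 1` and `∑_{Aᶜ} xᵢ = k - 1` with `0 < xᵢ < 1` force `1 < #A` and
`k - 1 < #Aᶜ`; conversely the point that is constant on `A` and on `Aᶜ` realises both sums. -/

open Finset

theorem Finset.card_inter_le_card_inter_add_card_sdiff {ι : Type*} [DecidableEq ι]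
    (A K L : Finset ι) : #(A ∩ L) ≤ #(A ∩ K) + #(L \ K) := by
  have hsub : A ∩ L ⊆ (A ∩ K) ∪ (L \ K) := by
    intro i
    simp only [mem_inter, mem_union, mem_sdiff]
    tauto
  exact (card_le_card hsub).trans (card_union_le _ _)

theorem not_card_inter_lt_one_and_one_lt_card_inter {ι : Type*} [DecidableEq ι]
    {A K L : Finset ι} (hLK : #(L \ K) = 1) :
    ¬(((A ∩ K).card : ℝ) < 1 ∧ (1 : ℝ) < ((A ∩ L).card : ℝ)) := by
  rintro ⟨hK, hL⟩
  have hK : #(A ∩ K) < 1 := by exact_mod_cast hK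
  have hL : 1 < #(A ∩ L) := by exact_mod_cast hL
  have := card_inter_le_card_inter_add_card_sdiff A K L
  omega

theorem Finset.sum_lt_card_of_lt_one {ι : Type*} {s : Finset ι} {x : ι → ℝ}
    (hx : ∀ i ∈ s, x i < 1) (hpos : 0 < ∑ i ∈ s, x i) : ∑ i ∈ s, x i < #s := by
  have hs : s.Nonempty := nonempty_of_sum_ne_zero hpos.ne'
  simpa using sum_lt_sum_of_nonempty hs hx

theorem Finset.sum_const_div_card {ι : Type*} {s : Finset ι} (hs : s.Nonempty) (c : ℝ) :
    ∑ _i ∈ s, c / #s = c := by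
  have : (#s : ℝ) ≠ 0 := by exact_mod_cast hs.card_pos.ne'
  rw [sum_const, nsmul_eq_mul]
  field_simp

section Hypersimplex

variable {n k : ℕ} {A : Finset (Fin n)}

theorem card_bounds_of_relintHS {x : Fin n → ℝ} (hk : 1 < k) (hx : relintHS k n x)
    (hA : ∑ i ∈ A, x i = 1) : 2 ≤ #A ∧ #A ≤ n - k := by
  obtain ⟨hbd, hsum⟩ := hx
  have hk : (1 : ℝ) < k := by exact_mod_cast hk
  have hAc : ∑ i ∈ Aᶜ, x i = k - 1 := by
    linarith [sum_add_sum_compl A x]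
  have hlt : ∀ s : Finset (Fin n), ∀ i ∈ s, x i < 1 := fun _ i _ => (hbd i).2
  have hA_lt : (1 : ℝ) < #A := hA ▸ sum_lt_card_of_lt_one (hlt A) (by linarith)
  have hAc_lt : (k : ℝ) - 1 < #Aᶜ := hAc ▸ sum_lt_card_of_lt_one (hlt Aᶜ) (by linarith)
  have hA_lt : 1 < #A := by exact_mod_cast hA_lt
  have hAc_lt : k < #Aᶜ + 1 := by
    have : (k : ℝ) < #Aᶜ + 1 := by linarith
    exact_mod_cast this
  have hcard : #A + #Aᶜ = n := by simp [card_add_card_compl A]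
  omega

theorem exists_relintHS_of_card_bounds (hk : 1 < k) (hA : 2 ≤ #A) (hAk : #A ≤ n - k) :
    ∃ x : Fin n → ℝ, relintHS k n x ∧ ∑ i ∈ A, x i = 1 := by
  have hcard : #A + #Aᶜ = n := by simp [card_add_card_compl A]
  have hA_pos : 0 < #A := by omega
  have hAc_pos : 0 < #Aᶜ := by omega
  let x : Fin n → ℝ := A.piecewise (fun _ => 1 / #A) (fun _ => (k - 1) / #Aᶜ)
  have hx_mem : ∀ i ∈ A, x i = 1 / #A := fun i hi => piecewise_eq_of_mem A _ _ hi
  have hx_notMem : ∀ i ∉ A, x i = (k - 1) / #Aᶜ := fun i hi => piecewise_eq_of_notMem A _ _ hi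
  have hxA : ∑ i ∈ A, x i = 1 := by
    rw [sum_congr rfl hx_mem]
    exact sum_const_div_card (card_pos.mp hA_pos) 1
  have hxAc : ∑ i ∈ Aᶜ, x i = k - 1 := by
    rw [sum_congr rfl fun i hi => hx_notMem i (mem_compl.mp hi)]
    exact sum_const_div_card (card_pos.mp hAc_pos) _
  refine ⟨x, ⟨fun i => ?_, ?_⟩, hxA⟩
  · have hA_pos : (0 : ℝ) < #A := by exact_mod_cast hA_pos
    have hAc_pos : (0 : ℝ) < #Aᶜ := by exact_mod_cast hAc_pos
    have hA : (1 : ℝ) < #A := by exact_mod_cast hA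
    have hk : (1 : ℝ) < k := by exact_mod_cast hk
    have hAc : (k : ℝ) - 1 < #Aᶜ := by
      have : k < #Aᶜ + 1 := by omega
      have : (k : ℝ) < #Aᶜ + 1 := by exact_mod_cast this
      linarith
    by_cases hi : i ∈ A
    · rw [hx_mem i hi, div_lt_one hA_pos]
      exact ⟨by positivity, hA⟩
    · rw [hx_notMem i hi, div_lt_one hAc_pos]
      exact ⟨div_pos (by linarith) hAc_pos, hAc⟩
  · rw [← sum_add_sum_compl A, hxA, hxAc]
    ring

theorem exists_relintHS_sum_eq_one_iff (hk : 1 < k) :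
    (∃ x : Fin n → ℝ, relintHS k n x ∧ ∑ i ∈ A, x i = 1) ↔ 2 ≤ #A ∧ #A ≤ n - k :=
  ⟨fun ⟨_, hx, hA⟩ => card_bounds_of_relintHS hk hx hA,
    fun ⟨hA, hAk⟩ => exists_relintHS_of_card_bounds hk hA hAk⟩

end Hypersimplex

theorem stmt0_general (n k : ℕ) (hk : 1 < k) (A : Finset (Fin n)) :
    (definesSplitHS k n A ↔ 2 ≤ A.card ∧ A.card ≤ n - k) ∧
    (¬(2 ≤ A.card ∧ A.card ≤ n - k) →
      ¬∃ x : Fin n → ℝ, relintHS k n x ∧ ∑ i ∈ A, x i = 1) := by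
  have key := exists_relintHS_sum_eq_one_iff (A := A) hk
  refine ⟨⟨fun h => key.mp h.1, fun h => ⟨key.mpr h, ?_⟩⟩, fun h hx => h (key.mp hx)⟩
  intro K L _ _ _ hLK
  exact not_card_inter_lt_one_and_one_lt_card_inter hLK

theorem stmt0 (n k : ℕ) (hk : 1 < k) (hkn : k < n) (A : Finset (Fin n)) :
    (definesSplitHS k n A ↔ 2 ≤ A.card ∧ A.card ≤ n - k) ∧
    (¬(2 ≤ A.card ∧ A.card ≤ n - k) →
      ¬∃ x : Fin n → ℝ, relintHS k n x ∧ ∑ i ∈ A, x i = 1) :=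
  stmt0_general n k hk A
end

section
/- If |X| = n ≥ 2k−1, then for every nontrivial split S = {A,B} of X we have max(|A|,|B|) ≥ k, and hence the regular subdivision of Δ(k,n) induced by the weight −δ^k_S is nontrivial; moreover the split S of X can be recovered from this subdivision. -/
/-- `C` is a cell (face of the lower envelope) of the regular subdivision of the
hypersimplex Δ(k,n) induced by the weight function `w` on its vertices
(identified with k-subsets of `{1,…,n}`): there is an affine functional
`K ↦ ∑_{i∈K} a i + c` lying weakly below `w` and touching it exactly on `C`. -/
def cellOf (k n : ℕ) (w : Finset (Fin n) → ℝ) (C : Set (Finset (Fin n))) : Prop :=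
  ∃ (a : Fin n → ℝ) (c : ℝ), ∀ K : Finset (Fin n), K.card = k →
    ((∑ i ∈ K, a i) + c ≤ w K ∧ (((∑ i ∈ K, a i) + c = w K) ↔ K ∈ C))

/-- `C` is a maximal cell of the regular subdivision induced by `w`. -/
def maxCellOf (k n : ℕ) (w : Finset (Fin n) → ℝ) (C : Set (Finset (Fin n))) : Prop :=
  cellOf k n w C ∧ ∀ C', cellOf k n w C' → C ⊆ C' → C' = C

/-- The split k-dissimilarity of the split `{A, Aᶜ}` of `{1,…,n}`. -/
def splitDiss (n : ℕ) (A : Finset (Fin n)) (K : Finset (Fin n)) : ℝ :=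
  if (K ∩ A).Nonempty ∧ (K ∩ Aᶜ).Nonempty then 1 else 0


/-!
The affine functional of a cell takes the same total on `D ∪ {u, v}, D ∪ {u', v'}` as on
`D ∪ {u, v'}, D ∪ {u', v}`. So a cell of `-δ_A` cannot contain both `D ∪ {x₁, x₂} ⊆ A` and
`D ∪ {y₁, y₂}` with `y₁, y₂ ∉ A`: the two mixed sets have weight `-1`, which would force
`0 + (-δ) ≤ -2`. When `|A| ≥ k` such a pair exists, so the subdivision is nontrivial.

The k-sets crossing a split form a cell (touched by the constant functional `-1`), so if `A'`
induces the same subdivision, the crossing family of `A'` is a cell of `-δ_A`. Unless `A'` is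
`A` or `Aᶜ`, a look at the four corners `A ∩ A'`, `A ∩ A'ᶜ`, `Aᶜ ∩ A'`, `Aᶜ ∩ A'ᶜ` produces a
forbidden pair in it; for `k = 2` with an empty corner the exchange instead forces a non-crossing
pair into the cell.
-/

open Finset

section

variable {α : Type*} [DecidableEq α] {D : Finset α} {u v : α}

lemma card_insert_insert (hu : u ∉ D) (hv : v ∉ D) (huv : u ≠ v) :
    (insert u (insert v D)).card = D.card + 2 := by
  rw [card_insert_of_notMem (by simp [huv, hu]), card_insert_of_notMem hv]

lemma sum_insert_insert {M : Type*} [AddCommMonoid M] (f : α → M) (hu : u ∉ D) (hv : v ∉ D)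
    (huv : u ≠ v) : ∑ i ∈ insert u (insert v D), f i = f u + f v + ∑ i ∈ D, f i := by
  rw [sum_insert (by simp [huv, hu]), sum_insert hv, add_assoc]

lemma sum_insert_insert_add_sum_insert_insert {M : Type*} [AddCommMonoid M] (f : α → M)
    {u' v' : α} (hu : u ∉ D) (hv : v ∉ D) (hu' : u' ∉ D) (hv' : v' ∉ D)
    (huv : u ≠ v) (hu'v' : u' ≠ v') (huv' : u ≠ v') (hu'v : u' ≠ v) :
    ∑ i ∈ insert u (insert v D), f i + ∑ i ∈ insert u' (insert v' D), f i =
      ∑ i ∈ insert u (insert v' D), f i + ∑ i ∈ insert u' (insert v D), f i := by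
  rw [sum_insert_insert f hu hv huv, sum_insert_insert f hu' hv' hu'v',
    sum_insert_insert f hu hv' huv', sum_insert_insert f hu' hv hu'v]
  abel

lemma le_card_sdiff_pair (A : Finset α) (x₁ x₂ : α) : A.card - 2 ≤ (A \ {x₁, x₂}).card :=
  (Nat.sub_le_sub_left card_le_two _).trans (le_card_sdiff _ _)

lemma card_add_card_compl_fin {n : ℕ} (A : Finset (Fin n)) : A.card + Aᶜ.card = n :=
  (card_add_card_compl A).trans (Fintype.card_fin n)

lemma exists_subset_card_add_two_eq {A : Finset α} {k : ℕ} (hk : 2 ≤ k) (hkA : k ≤ A.card)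
    (x₁ x₂ : α) : ∃ D ⊆ A, x₁ ∉ D ∧ x₂ ∉ D ∧ D.card + 2 = k := by
  obtain ⟨D, hD, hDcard⟩ :=
    exists_subset_card_eq ((Nat.sub_le_sub_right hkA 2).trans (le_card_sdiff_pair A x₁ x₂))
  obtain ⟨hDA, hx₁D, hx₂D⟩ : D ⊆ A ∧ x₁ ∉ D ∧ x₂ ∉ D := by simpa [subset_sdiff] using hD
  exact ⟨D, hDA, hx₁D, hx₂D, by omega⟩

end

namespace cellOf

variable {k n : ℕ} {w : Finset (Fin n) → ℝ} {C : Set (Finset (Fin n))} {D : Finset (Fin n)}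
  {u v u' v' : Fin n}

lemma add_le_add_of_mem (hC : cellOf k n w C) (hD : D.card + 2 = k)
    (hu : u ∉ D) (hv : v ∉ D) (hu' : u' ∉ D) (hv' : v' ∉ D)
    (huv : u ≠ v) (hu'v' : u' ≠ v') (huv' : u ≠ v') (hu'v : u' ≠ v)
    (hP : insert u (insert v D) ∈ C) (hQ : insert u' (insert v' D) ∈ C) :
    w (insert u (insert v D)) + w (insert u' (insert v' D)) ≤
      w (insert u (insert v' D)) + w (insert u' (insert v D)) := by
  obtain ⟨a, c, h⟩ := hC
  have hP := (h _ ((card_insert_insert hu hv huv).trans hD)).2.2 hP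
  have hQ := (h _ ((card_insert_insert hu' hv' hu'v').trans hD)).2.2 hQ
  have hR := (h _ ((card_insert_insert hu hv' huv').trans hD)).1
  have hT := (h _ ((card_insert_insert hu' hv hu'v).trans hD)).1
  have hsum := sum_insert_insert_add_sum_insert_insert a hu hv hu' hv' huv hu'v' huv' hu'v
  linarith

lemma mem_of_add_le (hC : cellOf k n w C) (hD : D.card + 2 = k)
    (hu : u ∉ D) (hv : v ∉ D) (hu' : u' ∉ D) (hv' : v' ∉ D)
    (huv : u ≠ v) (hu'v' : u' ≠ v') (huv' : u ≠ v') (hu'v : u' ≠ v)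
    (hP : insert u (insert v D) ∈ C) (hQ : insert u' (insert v' D) ∈ C)
    (hle : w (insert u (insert v' D)) + w (insert u' (insert v D)) ≤
      w (insert u (insert v D)) + w (insert u' (insert v' D))) :
    insert u (insert v' D) ∈ C := by
  obtain ⟨a, c, h⟩ := hC
  have hP := (h _ ((card_insert_insert hu hv huv).trans hD)).2.2 hP
  have hQ := (h _ ((card_insert_insert hu' hv' hu'v').trans hD)).2.2 hQ
  have hR := h _ ((card_insert_insert hu hv' huv').trans hD)
  have hT := (h _ ((card_insert_insert hu' hv hu'v).trans hD)).1
  have hsum := sum_insert_insert_add_sum_insert_insert a hu hv hu' hv' huv hu'v' huv' hu'v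
  exact hR.2.1 (le_antisymm hR.1 (by linarith))

end cellOf

section

variable {k n : ℕ} {A A' K : Finset (Fin n)}

def crossing (A : Finset (Fin n)) : Set (Finset (Fin n)) :=
  {K | (K ∩ A).Nonempty ∧ (K ∩ Aᶜ).Nonempty}

lemma mem_crossing_of_mem {x y : Fin n} (hx : x ∈ K) (hxA : x ∈ A) (hy : y ∈ K) (hyA : y ∉ A) :
    K ∈ crossing A :=
  ⟨⟨x, mem_inter.2 ⟨hx, hxA⟩⟩, ⟨y, mem_inter.2 ⟨hy, mem_compl.2 hyA⟩⟩⟩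

lemma notMem_crossing_of_subset (h : K ⊆ A) : K ∉ crossing A := by
  rintro ⟨-, y, hy⟩
  rw [mem_inter, mem_compl] at hy
  exact hy.2 (h hy.1)

lemma splitDiss_of_mem_crossing (h : K ∈ crossing A) : splitDiss n A K = 1 := if_pos h

lemma splitDiss_of_notMem_crossing (h : K ∉ crossing A) : splitDiss n A K = 0 := if_neg h

lemma splitDiss_le_one : splitDiss n A K ≤ 1 := by
  unfold splitDiss
  split_ifs <;> norm_num

lemma splitDiss_compl : splitDiss n Aᶜ K = splitDiss n A K := by
  simp only [splitDiss, compl_compl, and_comm]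

lemma cellOf_crossing (k : ℕ) (A : Finset (Fin n)) :
    cellOf k n (fun K => -splitDiss n A K) (crossing A) := by
  refine ⟨0, -1, fun K _ => ?_⟩
  by_cases hK : K ∈ crossing A
  · simp [splitDiss_of_mem_crossing hK, hK]
  · simp [splitDiss_of_notMem_crossing hK, hK]

def splitCells (k n : ℕ) (A : Finset (Fin n)) : Set (Set (Finset (Fin n))) :=
  {C | cellOf k n (fun K => -splitDiss n A K) C}

lemma splitCells_compl (k : ℕ) (A : Finset (Fin n)) : splitCells k n Aᶜ = splitCells k n A := by
  simp only [splitCells, splitDiss_compl]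

lemma cellOf_crossing_of_splitCells_eq (h : splitCells k n A = splitCells k n A') :
    cellOf k n (fun K => -splitDiss n A K) (crossing A') := by
  have : crossing A' ∈ splitCells k n A' := cellOf_crossing k A'
  rwa [← h] at this

lemma cellOf.insert_insert_notMem {C : Set (Finset (Fin n))} {D : Finset (Fin n)}
    {x₁ x₂ y₁ y₂ : Fin n} (hC : cellOf k n (fun K => -splitDiss n A K) C) (hD : D.card + 2 = k)
    (hDA : D ⊆ A) (hx₁D : x₁ ∉ D) (hx₂D : x₂ ∉ D) (hx₁ : x₁ ∈ A) (hx₂ : x₂ ∈ A) (hx : x₁ ≠ x₂)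
    (hy₁ : y₁ ∉ A) (hy₂ : y₂ ∉ A) (hy : y₁ ≠ y₂) (hP : insert x₁ (insert x₂ D) ∈ C) :
    insert y₁ (insert y₂ D) ∉ C := by
  intro hQ
  have hex := hC.add_le_add_of_mem hD hx₁D hx₂D (fun h => hy₁ (hDA h)) (fun h => hy₂ (hDA h))
    hx hy (ne_of_mem_of_not_mem hx₁ hy₂) (ne_of_mem_of_not_mem hx₂ hy₁).symm hP hQ
  have hwP : splitDiss n A (insert x₁ (insert x₂ D)) = 0 :=
    splitDiss_of_notMem_crossing
      (notMem_crossing_of_subset (insert_subset hx₁ (insert_subset hx₂ hDA)))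
  have hwR : splitDiss n A (insert x₁ (insert y₂ D)) = 1 :=
    splitDiss_of_mem_crossing (mem_crossing_of_mem (by simp) hx₁ (by simp) hy₂)
  have hwT : splitDiss n A (insert y₁ (insert x₂ D)) = 1 :=
    splitDiss_of_mem_crossing (mem_crossing_of_mem (by simp) hx₂ (by simp) hy₁)
  linarith [splitDiss_le_one (n := n) (A := A) (K := insert y₁ (insert y₂ D))]

lemma not_cellOf_card_eq (hk : 2 ≤ k) (hkA : k ≤ A.card) (hAc : 2 ≤ Aᶜ.card) :
    ¬ cellOf k n (fun K => -splitDiss n A K) {K | K.card = k} := by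
  intro hC
  obtain ⟨x₁, hx₁, x₂, hx₂, hx⟩ := one_lt_card.1 (by omega : 1 < A.card)
  obtain ⟨y₁, hy₁, y₂, hy₂, hy⟩ := one_lt_card.1 (by omega : 1 < Aᶜ.card)
  rw [mem_compl] at hy₁ hy₂
  obtain ⟨D, hDA, hx₁D, hx₂D, hD⟩ := exists_subset_card_add_two_eq hk hkA x₁ x₂
  exact hC.insert_insert_notMem hD hDA hx₁D hx₂D hx₁ hx₂ hx hy₁ hy₂ hy
    ((card_insert_insert hx₁D hx₂D hx).trans (by omega))
    ((card_insert_insert (fun h => hy₁ (hDA h)) (fun h => hy₂ (hDA h)) hy).trans (by omega))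

lemma not_cellOf_crossing_of_corners_nonempty (hk : 2 ≤ k) (hkA : k ≤ A.card)
    (hP : ¬ A ⊆ A'ᶜ) (hQ : ¬ A ⊆ A') (hR : ¬ Aᶜ ⊆ A'ᶜ) (hS : ¬ Aᶜ ⊆ A') :
    ¬ cellOf k n (fun K => -splitDiss n A K) (crossing A') := by
  intro hC
  obtain ⟨x₁, hx₁, hx₁'⟩ := not_subset.1 hP
  obtain ⟨x₂, hx₂, hx₂'⟩ := not_subset.1 hQ
  obtain ⟨y₁, hy₁, hy₁'⟩ := not_subset.1 hR
  obtain ⟨y₂, hy₂, hy₂'⟩ := not_subset.1 hS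
  rw [mem_compl, not_not] at hx₁' hy₁'
  rw [mem_compl] at hy₁ hy₂
  obtain ⟨D, hDA, hx₁D, hx₂D, hD⟩ := exists_subset_card_add_two_eq hk hkA x₁ x₂
  exact hC.insert_insert_notMem hD hDA hx₁D hx₂D hx₁ hx₂ (ne_of_mem_of_not_mem hx₁' hx₂')
    hy₁ hy₂ (ne_of_mem_of_not_mem hy₁' hy₂')
    (mem_crossing_of_mem (by simp) hx₁' (by simp) hx₂')
    (mem_crossing_of_mem (by simp) hy₁' (by simp) hy₂')

lemma not_cellOf_crossing_of_compl_subset_of_three_le (hk : 3 ≤ k) (hkA : k ≤ A.card)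
    (hsub : Aᶜ ⊆ A') {x : Fin n} (hx : x ∈ A) (hx' : x ∈ A') (hAc : 2 ≤ Aᶜ.card)
    (hA'c : 2 ≤ A'ᶜ.card) : ¬ cellOf k n (fun K => -splitDiss n A K) (crossing A') := by
  intro hC
  obtain ⟨x₂, hx₂, q, hq, hx₂q⟩ := one_lt_card.1 (by omega : 1 < A'ᶜ.card)
  obtain ⟨y₁, hy₁, y₂, hy₂, hy⟩ := one_lt_card.1 (by omega : 1 < Aᶜ.card)
  have hx₂A : x₂ ∈ A := compl_le_of_compl_le hsub hx₂
  have hqA : q ∈ A := compl_le_of_compl_le hsub hq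
  have hy₁' : y₁ ∈ A' := hsub hy₁
  rw [mem_compl] at hx₂ hq hy₁ hy₂
  -- `q ∈ D` lies outside `A'`, so `D ∪ {y₁, y₂}` still crosses `A'`.
  obtain ⟨D, hqD, hD, hDcard⟩ := exists_subsuperset_card_eq (s := {q}) (t := A \ {x, x₂})
    (by simp [hqA, hx₂q.symm, ne_of_mem_of_not_mem hx' hq |>.symm])
    (by rw [card_singleton]; omega)
    ((Nat.sub_le_sub_right hkA 2).trans (le_card_sdiff_pair A x x₂))
  obtain ⟨hDA, hxD, hx₂D⟩ : D ⊆ A ∧ x ∉ D ∧ x₂ ∉ D := by simpa [subset_sdiff] using hD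
  exact hC.insert_insert_notMem (by omega) hDA hxD hx₂D hx hx₂A (ne_of_mem_of_not_mem hx' hx₂)
    hy₁ hy₂ hy (mem_crossing_of_mem (by simp) hx' (by simp) hx₂)
    (mem_crossing_of_mem (by simp) hy₁' (by simp [hqD (mem_singleton_self q)]) hq)

lemma not_cellOf_two_crossing_of_compl_subset (hsub : Aᶜ ⊆ A') {x y : Fin n} (hx : x ∈ A)
    (hx' : x ∈ A') (hy : y ∉ A) (hA'c : 2 ≤ A'ᶜ.card) :
    ¬ cellOf 2 n (fun K => -splitDiss n A K) (crossing A') := by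
  intro hC
  obtain ⟨x₂, hx₂, x₂', hx₂', hx₂₂⟩ := one_lt_card.1 (by omega : 1 < A'ᶜ.card)
  have hx₂A : x₂ ∈ A := compl_le_of_compl_le hsub hx₂
  have hx₂'A : x₂' ∈ A := compl_le_of_compl_le hsub hx₂'
  have hy' : y ∈ A' := hsub (mem_compl.2 hy)
  rw [mem_compl] at hx₂ hx₂'
  have hxy : x ≠ y := ne_of_mem_of_not_mem hx hy
  have hwP : splitDiss n A (insert x (insert x₂ ∅)) = 0 :=
    splitDiss_of_notMem_crossing
      (notMem_crossing_of_subset (by simp [insert_subset_iff, hx, hx₂A]))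
  have hwQ : splitDiss n A (insert x₂' (insert y ∅)) = 1 :=
    splitDiss_of_mem_crossing (mem_crossing_of_mem (by simp) hx₂'A (by simp) hy)
  have hwR : splitDiss n A (insert x (insert y ∅)) = 1 :=
    splitDiss_of_mem_crossing (mem_crossing_of_mem (by simp) hx (by simp) hy)
  have hwT : splitDiss n A (insert x₂' (insert x₂ ∅)) = 0 :=
    splitDiss_of_notMem_crossing
      (notMem_crossing_of_subset (by simp [insert_subset_iff, hx₂A, hx₂'A]))
  -- Both sides of the exchange weigh `-1`, which forces `{x, y} ⊆ A'` into the cell.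
  have hR := hC.mem_of_add_le (by simp) (notMem_empty x) (notMem_empty x₂)
    (notMem_empty x₂') (notMem_empty y) (ne_of_mem_of_not_mem hx' hx₂)
    (ne_of_mem_of_not_mem hx₂'A hy) hxy hx₂₂.symm
    (mem_crossing_of_mem (by simp) hx' (by simp) hx₂)
    (mem_crossing_of_mem (by simp) hy' (by simp) hx₂')
    (by simp only [hwP, hwQ, hwR, hwT]; norm_num)
  exact notMem_crossing_of_subset (by simp [insert_subset_iff, hx', hy']) hR

lemma splitCells_ne_of_compl_subset (hk : 2 ≤ k) (hn : 2 * k - 1 ≤ n) (hAc : 2 ≤ Aᶜ.card)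
    (hA'c : 2 ≤ A'ᶜ.card) (hne : A' ≠ Aᶜ) (hsub : Aᶜ ⊆ A') :
    splitCells k n A ≠ splitCells k n A' := by
  intro h
  obtain ⟨x, hx', hx⟩ := not_subset.1 fun h' : A' ⊆ Aᶜ => hne (h'.antisymm hsub)
  rw [mem_compl, not_not] at hx
  obtain rfl | hk := hk.eq_or_lt
  · obtain ⟨y, hy⟩ := card_pos.1 (by omega : 0 < Aᶜ.card)
    exact not_cellOf_two_crossing_of_compl_subset hsub hx hx' (mem_compl.1 hy) hA'c
      (cellOf_crossing_of_splitCells_eq h)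
  have hcard := card_add_card_compl_fin A
  rcases le_or_gt k A.card with hkA | hkA
  · exact not_cellOf_crossing_of_compl_subset_of_three_le hk hkA hsub hx hx' hAc hA'c
      (cellOf_crossing_of_splitCells_eq h)
  · have hkA' : k ≤ A'.card := (by omega : k ≤ Aᶜ.card).trans (card_le_card hsub)
    exact not_cellOf_crossing_of_compl_subset_of_three_le hk hkA' (compl_le_of_compl_le hsub)
      hx' hx hA'c hAc (cellOf_crossing_of_splitCells_eq h.symm)

theorem eq_or_eq_compl_of_splitCells_eq (hk : 2 ≤ k) (hn : 2 * k - 1 ≤ n)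
    (hA : 2 ≤ A.card) (hAc : 2 ≤ Aᶜ.card) (hA' : 2 ≤ A'.card) (hA'c : 2 ≤ A'ᶜ.card)
    (h : splitCells k n A = splitCells k n A') : A' = A ∨ A' = Aᶜ := by
  by_contra! hne
  obtain ⟨hneA, hneAc⟩ := hne
  have hc : splitCells k n Aᶜ = splitCells k n A' := (splitCells_compl k A).trans h
  have hc' : splitCells k n A = splitCells k n A'ᶜ := h.trans (splitCells_compl k A').symm
  have hcc : splitCells k n Aᶜ = splitCells k n A'ᶜ := (splitCells_compl k A).trans hc'
  by_cases hS : Aᶜ ⊆ A'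
  · exact splitCells_ne_of_compl_subset hk hn hAc hA'c hneAc hS h
  by_cases hR : Aᶜ ⊆ A'ᶜ
  · exact splitCells_ne_of_compl_subset hk hn hAc (by rwa [compl_compl])
      (compl_injective.ne hneA) hR hc'
  by_cases hQ : A ⊆ A'
  · exact splitCells_ne_of_compl_subset hk hn (by rwa [compl_compl]) hA'c (by rwa [compl_compl])
      (by rwa [compl_compl]) hc
  by_cases hP : A ⊆ A'ᶜ
  · exact splitCells_ne_of_compl_subset hk hn (by rwa [compl_compl]) (by rwa [compl_compl])
      (compl_injective.ne hneAc) (by rwa [compl_compl]) hcc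
  have hcard := card_add_card_compl_fin A
  rcases le_or_gt k A.card with hkA | hkA
  · exact not_cellOf_crossing_of_corners_nonempty hk hkA hP hQ hR hS
      (cellOf_crossing_of_splitCells_eq h)
  · exact not_cellOf_crossing_of_corners_nonempty hk (by omega) hR hS (by rwa [compl_compl])
      (by rwa [compl_compl]) (cellOf_crossing_of_splitCells_eq hc)

end

theorem stmt5_general (n k : ℕ) (hk : 1 < k) (hn : 2 * k - 1 ≤ n)
    (A : Finset (Fin n)) (hntA : 2 ≤ A.card) (hntB : 2 ≤ Aᶜ.card) :
    k ≤ max A.card Aᶜ.card ∧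
    ¬cellOf k n (fun K => -splitDiss n A K) {K | K.card = k} ∧
    (∀ A' : Finset (Fin n), 2 ≤ A'.card → 2 ≤ A'ᶜ.card →
      {C | cellOf k n (fun K => -splitDiss n A K) C} =
        {C | cellOf k n (fun K => -splitDiss n A' K) C} →
      A' = A ∨ A' = Aᶜ) := by
  have hcard := card_add_card_compl_fin A
  have hsize : k ≤ A.card ∨ k ≤ Aᶜ.card := by omega
  refine ⟨le_max_iff.2 hsize, ?_, fun A' hA' hA'c h =>
    eq_or_eq_compl_of_splitCells_eq hk hn hntA hntB hA' hA'c h⟩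
  rcases hsize with hkA | hkA
  · exact not_cellOf_card_eq hk hkA hntB
  · simpa only [splitDiss_compl] using not_cellOf_card_eq hk hkA (by rwa [compl_compl])

/-- If `n ≥ 2k−1` then for every nontrivial split `{A, Aᶜ}` of `X` we have
`max(|A|,|Aᶜ|) ≥ k`; hence the regular subdivision of Δ(k,n) induced by `−δ^k_S`
is nontrivial (the full vertex set is not a cell), and the split can be recovered
from the subdivision: any nontrivial split inducing the same subdivision equals
`{A, Aᶜ}`. -/
theorem stmt5 (n k : ℕ) (hk : 1 < k) (hkn : k < n) (hn : 2 * k - 1 ≤ n)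
    (A : Finset (Fin n)) (hntA : 2 ≤ A.card) (hntB : 2 ≤ Aᶜ.card) :
    k ≤ max A.card Aᶜ.card ∧
    ¬cellOf k n (fun K => -splitDiss n A K) {K | K.card = k} ∧
    (∀ A' : Finset (Fin n), 2 ≤ A'.card → 2 ≤ A'ᶜ.card →
      {C | cellOf k n (fun K => -splitDiss n A K) C} =
        {C | cellOf k n (fun K => -splitDiss n A' K) C} →
      A' = A ∨ A' = Aᶜ) :=
  stmt5_general n k hk hn A hntA hntB
end

section
/- Suppose X = {1,...,n}, 1 < k < n, and there exist pairwise distinct i₀, i₁, i₂, i₃ ∈ X and subsets A₁, A₂, A₃ of X (each defining a split of Δ(k,n)) with i_m ∈ A_l iff m ∈ {0, l}, and |X ∖ (A₁ ∪ A₂ ∪ A₃)| ≥ k − 2. Then the set of splits {S_{A₁}, S_{A₂}, S_{A₃}} of Δ(k,n) is not weakly compatible: there is a face F of Δ(k,n) such that F ∩ H_{A₁} ∩ H_{A₂} ∩ H_{A₃} is a single point x with coordinates x_i = 1 for i in a chosen (k−2)-subset B of X∖(A₁∪A₂∪A₃), x_{i_j} = 1/2 for j = 0,1,2,3, and x_i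 = 0 otherwise; this point is not a vertex of Δ(k,n). -/
/-!
On the face of Δ(k,n) cut out by `x_j = 1` on `B` and `x_j = 0` off `B ∪ {i₀,i₁,i₂,i₃}`, a point
is determined by the four values `a_m = x_{i_m}`. The hyperplane `H_{A_l}` meets
`{i₀,…,i₃}` in exactly `{i₀, i_l}` and misses `B`, so it reads `a₀ + a_l = 1`; the hypersimplex
equation reads `a₀ + a₁ + a₂ + a₃ = 2`. Adding the three hyperplane equations and subtracting the
last one gives `2 a₀ = 1`, so all `a_m = 1/2`: the intersection is the single point with a
coordinate `1/2`, which is not a vertex.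
-/

open scoped Classical

/-- Membership in the hypersimplex Δ(k,n). -/
def memHS (k n : ℕ) (x : Fin n → ℝ) : Prop :=
  (∀ i, 0 ≤ x i ∧ x i ≤ 1) ∧ ∑ i, x i = (k : ℝ)

open Finset Function

section Sums

variable {α ι : Type*} [DecidableEq α] [Fintype ι] {i : ι → α} {y : α → ℝ}

theorem sum_eq_sum_filter_comp (hi : Injective i) {A : Finset α}
    (hy : ∀ j ∈ A, (¬∃ m, j = i m) → y j = 0) :
    ∑ j ∈ A, y j = ∑ m with i m ∈ A, y (i m) := by
  rw [← sum_image fun _ _ _ _ h => hi h]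
  refine (sum_subset (fun j hj => ?_) fun j hjA hj => hy j hjA ?_).symm
  · obtain ⟨m, hm, rfl⟩ := mem_image.1 hj
    exact (mem_filter.1 hm).2
  · rintro ⟨m, rfl⟩
    exact hj (mem_image_of_mem _ (mem_filter.2 ⟨mem_univ m, hjA⟩))

variable {B : Finset α}

theorem sum_eq_add_of_comp_mem_iff (hi : Injective i) {A : Finset α} (hAB : Disjoint A B)
    (h0 : ∀ j, j ∉ B → (¬∃ m, j = i m) → y j = 0) {m₁ m₂ : ι} (hne : m₁ ≠ m₂)
    (hA : ∀ m, i m ∈ A ↔ m = m₁ ∨ m = m₂) :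
    ∑ j ∈ A, y j = y (i m₁) + y (i m₂) := by
  have hfilter : ({m | i m ∈ A} : Finset ι) = {m₁, m₂} := by
    ext m
    simp [hA]
  rw [sum_eq_sum_filter_comp hi fun j hj => h0 j (disjoint_left.1 hAB hj), hfilter,
    sum_pair hne]

variable [Fintype α]

theorem sum_eq_card_add_sum_comp (hi : Injective i) (hiB : ∀ m, i m ∉ B)
    (h1 : ∀ j ∈ B, y j = 1) (h0 : ∀ j, j ∉ B → (¬∃ m, j = i m) → y j = 0) :
    ∑ j, y j = B.card + ∑ m, y (i m) := by
  rw [← sum_add_sum_compl B, sum_congr rfl h1,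
    sum_eq_sum_filter_comp hi fun j hj => h0 j (mem_compl.1 hj)]
  simp [hiB]

end Sums

section HalfPoint

variable {α : Type*} [DecidableEq α] {r : ℕ}

noncomputable def halfPoint (B : Finset α) (i : Fin r → α) (j : α) : ℝ :=
  if j ∈ B then 1 else if ∃ m, j = i m then 1 / 2 else 0

variable {B : Finset α} {i : Fin r → α}

theorem halfPoint_apply_of_mem {j : α} (hj : j ∈ B) : halfPoint B i j = 1 := if_pos hj

theorem halfPoint_apply_comp (hiB : ∀ m, i m ∉ B) (m : Fin r) : halfPoint B i (i m) = 1 / 2 := by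
  rw [halfPoint, if_neg (hiB m), if_pos ⟨m, rfl⟩]

theorem halfPoint_apply_of_not_mem {j : α} (hjB : j ∉ B) (hji : ¬∃ m, j = i m) :
    halfPoint B i j = 0 := by
  rw [halfPoint, if_neg hjB, if_neg hji]

theorem halfPoint_mem_Icc (j : α) : halfPoint B i j ∈ Set.Icc 0 1 := by
  unfold halfPoint
  split_ifs <;> norm_num

theorem eq_halfPoint {y : α → ℝ} (h1 : ∀ j ∈ B, y j = 1)
    (h0 : ∀ j, j ∉ B → (¬∃ m, j = i m) → y j = 0) (hhalf : ∀ m, y (i m) = 1 / 2) :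
    y = halfPoint B i := by
  funext j
  unfold halfPoint
  split_ifs with hjB hji
  · exact h1 j hjB
  · obtain ⟨m, rfl⟩ := hji
    exact hhalf m
  · exact h0 j hjB hji

theorem halfPoint_ne_indicator (hiB : ∀ m, i m ∉ B) (m : Fin r) (K : Finset α) :
    halfPoint B i ≠ fun j => if j ∈ K then 1 else 0 := by
  intro h
  have hm := congrFun h (i m)
  rw [halfPoint_apply_comp hiB] at hm
  split_ifs at hm <;> norm_num at hm

theorem sum_halfPoint [Fintype α] (hi : Injective i) (hiB : ∀ m, i m ∉ B) :
    ∑ j, halfPoint B i j = B.card + r / 2 := by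
  rw [sum_eq_card_add_sum_comp hi hiB (fun _ => halfPoint_apply_of_mem)
    fun _ => halfPoint_apply_of_not_mem]
  simp [halfPoint_apply_comp hiB, div_eq_mul_inv]

end HalfPoint

theorem eq_half_of_add_eq_one {a : Fin 4 → ℝ} (hpair : ∀ l : Fin 3, a 0 + a l.succ = 1)
    (hsum : ∑ m, a m = 2) (m : Fin 4) : a m = 1 / 2 := by
  have h1 : a 0 + a 1 = 1 := hpair 0
  have h2 : a 0 + a 2 = 1 := hpair 1
  have h3 : a 0 + a 3 = 1 := hpair 2
  rw [Fin.sum_univ_four] at hsum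
  fin_cases m <;> dsimp <;> linarith

theorem stmt9_general (n k : ℕ) (hk : 1 < k)
    (i : Fin 4 → Fin n) (hi : Function.Injective i)
    (A : Fin 3 → Finset (Fin n))
    (hmem : ∀ (l : Fin 3) (m : Fin 4), i m ∈ A l ↔ (m = 0 ∨ m = l.succ))
    (hcard : k - 2 ≤ (Finset.univ \ (A 0 ∪ A 1 ∪ A 2)).card) :
    ∃ B : Finset (Fin n), B ⊆ Finset.univ \ (A 0 ∪ A 1 ∪ A 2) ∧ B.card = k - 2 ∧
      ({y : Fin n → ℝ | memHS k n y ∧ (∀ j ∈ B, y j = 1) ∧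
          (∀ j : Fin n, j ∉ B → (¬∃ m : Fin 4, j = i m) → y j = 0) ∧
          ∀ l : Fin 3, ∑ j ∈ A l, y j = 1} =
        {fun j : Fin n => if j ∈ B then (1 : ℝ) else
          if ∃ m : Fin 4, j = i m then 1 / 2 else 0}) ∧
      ¬∃ K : Finset (Fin n), K.card = k ∧
        (fun j : Fin n => if j ∈ B then (1 : ℝ) else
          if ∃ m : Fin 4, j = i m then 1 / 2 else 0) =
        fun j => if j ∈ K then 1 else 0 := by
  obtain ⟨B, hBsub, hBcard⟩ := exists_subset_card_eq hcard
  have hAB : ∀ l, Disjoint (A l) B := fun l =>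
    disjoint_right.2 fun j hj hjA => (mem_sdiff.1 (hBsub hj)).2 <| by
      fin_cases l <;> simp_all
  have hiB : ∀ m, i m ∉ B := Fin.cases (disjoint_left.1 (hAB 0) ((hmem 0 0).2 (.inl rfl)))
    fun l => disjoint_left.1 (hAB l) ((hmem l l.succ).2 (.inr rfl))
  have hB : (B.card : ℝ) = k - 2 := by rw [hBcard, Nat.cast_sub hk]; norm_num
  have hsumA : ∀ (y : Fin n → ℝ), (∀ j, j ∉ B → (¬∃ m, j = i m) → y j = 0) →
      ∀ l, ∑ j ∈ A l, y j = y (i 0) + y (i l.succ) := fun y h0 l =>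
    sum_eq_add_of_comp_mem_iff hi (hAB l) h0 (Fin.succ_ne_zero l).symm (hmem l)
  refine ⟨B, hBsub, hBcard, ?_, fun ⟨K, _, hK⟩ => halfPoint_ne_indicator hiB 0 K hK⟩
  ext y
  change _ ↔ y = halfPoint B i
  constructor
  · rintro ⟨⟨-, hsum⟩, h1, h0, hA⟩
    rw [sum_eq_card_add_sum_comp hi hiB h1 h0, hB] at hsum
    refine eq_halfPoint h1 h0 (eq_half_of_add_eq_one (fun l => ?_) (by linarith))
    rw [← hsumA y h0, hA]
  · rintro rfl
    refine ⟨⟨halfPoint_mem_Icc, ?_⟩, fun _ => halfPoint_apply_of_mem,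
      fun _ => halfPoint_apply_of_not_mem, fun l => ?_⟩
    · rw [sum_halfPoint hi hiB, hB]
      norm_num
    · rw [hsumA _ (fun _ => halfPoint_apply_of_not_mem), halfPoint_apply_comp hiB,
        halfPoint_apply_comp hiB]
      norm_num

/-- In configuration (a): pairwise distinct `i₀,i₁,i₂,i₃` and sets `A₁,A₂,A₃`
(each defining a split of Δ(k,n)) with `i_m ∈ A_l ↔ m ∈ {0,l}` and
`|X∖(A₁∪A₂∪A₃)| ≥ k−2`, the splits `S_{A₁},S_{A₂},S_{A₃}` are not weakly
compatible: some face of Δ(k,n) meets the three hyperplanes in the single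
non-vertex point `x` with `x_i = 1` on a `(k−2)`-set `B ⊆ X∖(A₁∪A₂∪A₃)`,
`x_{i_j} = 1/2`, and `x_i = 0` otherwise. -/
theorem stmt9 (n k : ℕ) (hk : 1 < k) (hkn : k < n)
    (i : Fin 4 → Fin n) (hi : Function.Injective i)
    (A : Fin 3 → Finset (Fin n))
    (hsplit : ∀ l, 2 ≤ (A l).card ∧ (A l).card ≤ n - k)
    (hmem : ∀ (l : Fin 3) (m : Fin 4), i m ∈ A l ↔ (m = 0 ∨ m = l.succ))
    (hcard : k - 2 ≤ (Finset.univ \ (A 0 ∪ A 1 ∪ A 2)).card) :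
    ∃ B : Finset (Fin n), B ⊆ Finset.univ \ (A 0 ∪ A 1 ∪ A 2) ∧ B.card = k - 2 ∧
      ({y : Fin n → ℝ | memHS k n y ∧ (∀ j ∈ B, y j = 1) ∧
          (∀ j : Fin n, j ∉ B → (¬∃ m : Fin 4, j = i m) → y j = 0) ∧
          ∀ l : Fin 3, ∑ j ∈ A l, y j = 1} =
        {fun j : Fin n => if j ∈ B then (1 : ℝ) else
          if ∃ m : Fin 4, j = i m then 1 / 2 else 0}) ∧
      ¬∃ K : Finset (Fin n), K.card = k ∧
        (fun j : Fin n => if j ∈ B then (1 : ℝ) else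
          if ∃ m : Fin 4, j = i m then 1 / 2 else 0) =
        fun j => if j ∈ K then 1 else 0 :=
  stmt9_general n k hk i hi A hmem hcard
end

section
/- Suppose X = {1,...,n}, 1 < k < n, 1 ≤ ν < k, and there exist pairwise distinct i₁, ..., i_{2ν+1} ∈ X and subsets A₁, ..., A_{2ν+1} of X (each defining a split of Δ(k,n)) with i_m ∈ A_l iff m ∈ {l, l+1} (indices modulo 2ν+1), and |X ∖ ⋃_{l=1}^{2ν+1} A_l| ≥ k − ν. Then the set {S_{A₁}, ..., S_{A_{2ν+1}}} of splits of Δ(k,n) is not weakly compatible. -/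
/-- The family of splits `{S_A : A ∈ 𝒜}` of Δ(k,n) is *not* weakly compatible,
expressed via the criterion: some subfamily of the hyperplanes `H_A` intersects a
face of Δ(k,n) (cut out by coordinates fixed to 0 on `Z` and to 1 on `O`) in a
single point which is not a vertex of Δ(k,n). -/
def notWeaklyCompatibleHS (k n : ℕ) (𝒜 : Set (Finset (Fin n))) : Prop :=
  ∃ 𝒜' ⊆ 𝒜, ∃ (Z O : Finset (Fin n)) (x : Fin n → ℝ),
    {y : Fin n → ℝ | memHS k n y ∧ (∀ i ∈ Z, y i = 0) ∧ (∀ i ∈ O, y i = 1) ∧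
        ∀ A ∈ 𝒜', ∑ i ∈ A, y i = 1} = {x} ∧
    ¬∃ K : Finset (Fin n), K.card = k ∧ x = fun i => if i ∈ K then (1 : ℝ) else 0

open Finset

lemma eq_one_half_of_add_add_eq_one {G : Type*} [AddGroup G] {c : G → ℝ} {g : G} {ν : ℕ}
    (hg : (2 * ν + 1) • g = 0) (h : ∀ x, c x + c (x + g) = 1) (x : G) : c x = 1 / 2 := by
  have hper : Function.Periodic c (2 • g) := fun y => by
    have h₁ := h y
    have h₂ := h (y + g)
    rw [two_nsmul, ← add_assoc]
    linarith
  have hshift : x + g + ν • 2 • g = x := by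
    rw [← mul_nsmul', add_assoc, ← succ_nsmul', mul_comm, hg, add_zero]
  have hsucc : c (x + g) = c x := by
    simpa only [hshift] using (hper.nsmul ν (x + g)).symm
  linarith [h x]

section OddCycle

variable {n ν : ℕ} {i : Fin (2 * ν + 1) → Fin n} {A : Fin (2 * ν + 1) → Finset (Fin n)}
  {T : Finset (Fin n)}

lemma apply_mem_biUnion (hmem : ∀ l m, i m ∈ A l ↔ (m = l ∨ m = l + 1)) (m : Fin (2 * ν + 1)) :
    i m ∈ univ.biUnion A :=
  mem_biUnion.mpr ⟨m, mem_univ _, (hmem m m).mpr (.inl rfl)⟩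

lemma sum_eq_add_of_eq_zero_off (hi : Function.Injective i)
    (hmem : ∀ l m, i m ∈ A l ↔ (m = l ∨ m = l + 1))
    (hT : Disjoint T (univ.biUnion A)) (hν : 1 ≤ ν) {y : Fin n → ℝ}
    (hy : ∀ j ∈ (univ.image i ∪ T)ᶜ, y j = 0) (l : Fin (2 * ν + 1)) :
    ∑ j ∈ A l, y j = y (i l) + y (i (l + 1)) := by
  have hne : i l ≠ i (l + 1) := by
    have hl : l ≠ l + 1 := by simpa [Fin.one_eq_zero_iff] using Nat.one_le_iff_ne_zero.mp hν
    exact fun h => hl (hi h)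
  rw [← sum_pair hne]
  refine (sum_subset ?_ fun j hj hjp => hy j ?_).symm
  · exact insert_subset_iff.mpr ⟨(hmem l l).mpr (.inl rfl),
      singleton_subset_iff.mpr ((hmem l (l + 1)).mpr (.inr rfl))⟩
  · have hjI : j ∉ univ.image i := by
      rintro hj'
      obtain ⟨m, -, rfl⟩ := mem_image.mp hj'
      rcases (hmem l m).mp hj with rfl | rfl <;> simp at hjp
    have hjT : j ∉ T := disjoint_left.mp hT.symm (mem_biUnion.mpr ⟨l, mem_univ _, hj⟩)
    simp [hjI, hjT]

lemma sum_univ_eq_of_eq_zero_off (hi : Function.Injective i)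
    (hmem : ∀ l m, i m ∈ A l ↔ (m = l ∨ m = l + 1))
    (hT : Disjoint T (univ.biUnion A)) {w : Fin n} (hw : w ∈ T) {y : Fin n → ℝ}
    (hy : ∀ j ∈ (univ.image i ∪ T)ᶜ, y j = 0) (hy₁ : ∀ j ∈ T.erase w, y j = 1) :
    ∑ j, y j = ∑ m, y (i m) + y w + (#T - 1) := by
  have hIT : Disjoint (univ.image i) T := disjoint_left.mpr fun j hj => by
    obtain ⟨m, -, rfl⟩ := mem_image.mp hj
    exact disjoint_right.mp hT (apply_mem_biUnion hmem m)
  rw [← sum_subset (subset_univ (univ.image i ∪ T)) fun j _ hj => hy j (by simpa using hj),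
    sum_union hIT, sum_image fun _ _ _ _ h => hi h, ← add_sum_erase T y hw,
    sum_congr rfl hy₁, sum_const, nsmul_one, cast_card_erase_of_mem hw, add_assoc]

noncomputable def oddCyclePoint (i : Fin (2 * ν + 1) → Fin n) (T : Finset (Fin n)) (w : Fin n) :
    Fin n → ℝ :=
  fun j => if j ∈ T.erase w then 1 else if j ∈ univ.image i ∪ T then 1 / 2 else 0

lemma oddCyclePoint_apply (hmem : ∀ l m, i m ∈ A l ↔ (m = l ∨ m = l + 1))
    (hT : Disjoint T (univ.biUnion A)) (m : Fin (2 * ν + 1)) (w : Fin n) :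
    oddCyclePoint i T w (i m) = 1 / 2 := by
  have hm : i m ∉ T := disjoint_right.mp hT (apply_mem_biUnion hmem m)
  simp [oddCyclePoint, hm]

lemma oddCyclePoint_self {w : Fin n} (hw : w ∈ T) : oddCyclePoint i T w w = 1 / 2 := by
  simp [oddCyclePoint, hw]

lemma oddCyclePoint_of_notMem {w j : Fin n} (hj : j ∉ univ.image i ∪ T) :
    oddCyclePoint i T w j = 0 := by
  have hjT : j ∉ T.erase w := fun h => hj (mem_union_right _ (mem_of_mem_erase h))
  simp only [oddCyclePoint, hjT, hj, if_false]

lemma memHS_oddCyclePoint {k : ℕ} (hi : Function.Injective i)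
    (hmem : ∀ l m, i m ∈ A l ↔ (m = l ∨ m = l + 1)) (hT : Disjoint T (univ.biUnion A))
    {w : Fin n} (hw : w ∈ T) (hTk : #T + ν = k) : memHS k n (oddCyclePoint i T w) := by
  refine ⟨fun j => ?_, ?_⟩
  · simp only [oddCyclePoint]
    split_ifs <;> norm_num
  · rw [sum_univ_eq_of_eq_zero_off hi hmem hT hw (fun j hj => oddCyclePoint_of_notMem
        (mem_compl.mp hj)) (fun j hj => if_pos hj), oddCyclePoint_self hw,
      sum_congr rfl fun m _ => oddCyclePoint_apply hmem hT m w, sum_const, card_univ,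
      Fintype.card_fin, nsmul_eq_mul, ← hTk]
    push_cast
    ring

open Fin.NatCast in
lemma eq_oddCyclePoint {k : ℕ} (hi : Function.Injective i)
    (hmem : ∀ l m, i m ∈ A l ↔ (m = l ∨ m = l + 1)) (hT : Disjoint T (univ.biUnion A))
    (hν : 1 ≤ ν) {w : Fin n} (hw : w ∈ T) (hTk : #T + ν = k) {y : Fin n → ℝ}
    (hsum : ∑ j, y j = k) (hy₀ : ∀ j ∈ (univ.image i ∪ T)ᶜ, y j = 0)
    (hy₁ : ∀ j ∈ T.erase w, y j = 1) (hA : ∀ l, ∑ j ∈ A l, y j = 1) :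
    y = oddCyclePoint i T w := by
  have hhalf : ∀ m, y (i m) = 1 / 2 :=
    eq_one_half_of_add_add_eq_one (c := fun m => y (i m)) (g := 1)
      ((nsmul_one _).trans (Fin.natCast_self _)) fun l => by
        rw [← sum_eq_add_of_eq_zero_off hi hmem hT hν hy₀, hA]
  have hyw : y w = 1 / 2 := by
    have h := sum_univ_eq_of_eq_zero_off hi hmem hT hw hy₀ hy₁
    rw [hsum, sum_congr rfl fun m _ => hhalf m, sum_const, card_univ, Fintype.card_fin,
      nsmul_eq_mul, ← hTk] at h
    push_cast at h
    linarith
  funext j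
  simp only [oddCyclePoint]
  split_ifs with h₁ h₂
  · exact hy₁ j h₁
  · rcases mem_union.mp h₂ with hj | hj
    · obtain ⟨m, -, rfl⟩ := mem_image.mp hj
      exact hhalf m
    · obtain rfl : j = w := by_contra fun hjw => h₁ (mem_erase_of_ne_of_mem hjw hj)
      exact hyw
  · exact hy₀ j (by simpa using h₂)

lemma face_inter_hyperplanes_eq_singleton {k : ℕ} (hi : Function.Injective i)
    (hmem : ∀ l m, i m ∈ A l ↔ (m = l ∨ m = l + 1)) (hT : Disjoint T (univ.biUnion A))
    (hν : 1 ≤ ν) {w : Fin n} (hw : w ∈ T) (hTk : #T + ν = k) :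
    {y : Fin n → ℝ | memHS k n y ∧ (∀ j ∈ (univ.image i ∪ T)ᶜ, y j = 0) ∧
        (∀ j ∈ T.erase w, y j = 1) ∧ ∀ B ∈ {B | ∃ l, B = A l}, ∑ j ∈ B, y j = 1} =
      {oddCyclePoint i T w} := by
  have hx₀ : ∀ j ∈ (univ.image i ∪ T)ᶜ, oddCyclePoint i T w j = 0 :=
    fun j hj => oddCyclePoint_of_notMem (mem_compl.mp hj)
  refine Set.eq_singleton_iff_unique_mem.mpr ⟨⟨memHS_oddCyclePoint hi hmem hT hw hTk, hx₀,
    fun j hj => if_pos hj, ?_⟩, ?_⟩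
  · rintro B ⟨l, rfl⟩
    rw [sum_eq_add_of_eq_zero_off hi hmem hT hν hx₀, oddCyclePoint_apply hmem hT,
      oddCyclePoint_apply hmem hT]
    norm_num
  · rintro y ⟨⟨-, hsum⟩, hy₀, hy₁, hA⟩
    exact eq_oddCyclePoint hi hmem hT hν hw hTk hsum hy₀ hy₁ fun l => hA _ ⟨l, rfl⟩

end OddCycle

theorem stmt10_general (n k ν : ℕ) (hν : 1 ≤ ν) (hνk : ν < k)
    (i : Fin (2 * ν + 1) → Fin n) (hi : Function.Injective i)
    (A : Fin (2 * ν + 1) → Finset (Fin n))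
    (hmem : ∀ l m : Fin (2 * ν + 1), i m ∈ A l ↔ (m = l ∨ m = l + 1))
    (hcard : k - ν ≤ (Finset.univ \ Finset.univ.biUnion A).card) :
    notWeaklyCompatibleHS k n {B | ∃ l, B = A l} := by
  obtain ⟨T, hTU, hTcard⟩ := exists_subset_card_eq hcard
  have hT : Disjoint T (univ.biUnion A) := disjoint_of_subset_left hTU sdiff_disjoint
  obtain ⟨w, hw⟩ : T.Nonempty := card_pos.mp (by omega)
  refine ⟨_, subset_rfl, (univ.image i ∪ T)ᶜ, T.erase w, oddCyclePoint i T w,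
    face_inter_hyperplanes_eq_singleton hi hmem hT hν hw (by omega), ?_⟩
  rintro ⟨K, -, hK⟩
  have hwK := congrFun hK w
  rw [oddCyclePoint_self hw] at hwK
  split_ifs at hwK <;> norm_num at hwK

/-- Configuration (b): an odd cycle `A₁,…,A_{2ν+1}` with `i_m ∈ A_l ↔ m ∈ {l,l+1}`
(mod `2ν+1`) and `|X∖⋃A_l| ≥ k−ν` makes the splits `S_{A₁},…,S_{A_{2ν+1}}` of
Δ(k,n) not weakly compatible. -/
theorem stmt10 (n k ν : ℕ) (hk : 1 < k) (hkn : k < n) (hν : 1 ≤ ν) (hνk : ν < k)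
    (i : Fin (2 * ν + 1) → Fin n) (hi : Function.Injective i)
    (A : Fin (2 * ν + 1) → Finset (Fin n))
    (hsplit : ∀ l, 2 ≤ (A l).card ∧ (A l).card ≤ n - k)
    (hmem : ∀ l m : Fin (2 * ν + 1), i m ∈ A l ↔ (m = l ∨ m = l + 1))
    (hcard : k - ν ≤ (Finset.univ \ Finset.univ.biUnion A).card) :
    notWeaklyCompatibleHS k n {B | ∃ l, B = A l} :=
  stmt10_general n k ν hν hνk i hi A hmem hcard
end

section
/- Let {A,B} and {C,D} be two distinct compatible splits of X with A ∩ C = ∅. Then among the pairs of hypersimplex splits from {S_A, S_B, S_C, S_D}, the only possibly incompatible pair is (S_A, S_C), and S_A, S_C are compatible if and only if k = 2 or |A ∪ C| ≥ n − k + 2. -/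
/-- Compatibility of the hypersimplex splits `S_E`, `S_F` of Δ(k,n) defined by
`E, F ⊆ X` (characterization of Herrmann–Joswig). -/
def hsCompat (n k : ℕ) (E F : Finset (Fin n)) : Prop :=
  E ⊆ F ∨ F ⊆ E ∨ n - k + 2 ≤ (E ∪ F).card ∨ (k = 2 ∧ E ∩ F = ∅)

namespace hsCompat

variable {n k : ℕ} {E F : Finset (Fin n)}

theorem of_subset (h : E ⊆ F) : hsCompat n k E F :=
  Or.inl h

theorem of_superset (h : F ⊆ E) : hsCompat n k E F :=
  Or.inr (Or.inl h)

theorem of_le_card_union (h : n - k + 2 ≤ (E ∪ F).card) : hsCompat n k E F :=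
  Or.inr (Or.inr (Or.inl h))

theorem of_union_eq_univ (hk : 2 ≤ k) (hkn : k ≤ n) (h : E ∪ F = Finset.univ) :
    hsCompat n k E F :=
  of_le_card_union <| by rw [h, Finset.card_univ, Fintype.card_fin]; omega

theorem iff_of_disjoint (hE : E.Nonempty) (hF : F.Nonempty) (h : Disjoint E F) :
    hsCompat n k E F ↔ k = 2 ∨ n - k + 2 ≤ (E ∪ F).card := by
  have hEF : ¬E ⊆ F := fun hs => hE.ne_empty (h.eq_bot_of_le hs)
  have hFE : ¬F ⊆ E := fun hs => hF.ne_empty (h.eq_bot_of_ge hs)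
  have hinter : E ∩ F = ∅ := Finset.disjoint_iff_inter_eq_empty.mp h
  unfold hsCompat
  simp only [hEF, hFE, hinter, and_true, false_or]
  exact or_comm

end hsCompat

theorem stmt13_general (n k : ℕ) (hk : 1 < k) (hkn : k < n) (A C : Finset (Fin n))
    (hA : 2 ≤ A.card ∧ A.card ≤ n - k)
    (hC : 2 ≤ C.card ∧ C.card ≤ n - k)
    (hAC : A ∩ C = ∅) :
    hsCompat n k A Aᶜ ∧ hsCompat n k A Cᶜ ∧ hsCompat n k Aᶜ C ∧
    hsCompat n k Aᶜ Cᶜ ∧ hsCompat n k C Cᶜ ∧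
    (hsCompat n k A C ↔ (k = 2 ∨ n - k + 2 ≤ (A ∪ C).card)) := by
  have hdisj : Disjoint A C := Finset.disjoint_iff_inter_eq_empty.mpr hAC
  have hAne : A.Nonempty := Finset.card_pos.mp (by omega)
  have hCne : C.Nonempty := Finset.card_pos.mp (by omega)
  have hcompl_union : Aᶜ ∪ Cᶜ = Finset.univ := by
    rw [← Finset.compl_inter, hAC, Finset.compl_empty]
  exact ⟨.of_union_eq_univ hk hkn.le A.union_compl,
    .of_subset (Finset.subset_compl_iff_disjoint_right.mpr hdisj),
    .of_superset (Finset.subset_compl_iff_disjoint_right.mpr hdisj.symm),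
    .of_union_eq_univ hk hkn.le hcompl_union,
    .of_union_eq_univ hk hkn.le C.union_compl,
    hsCompat.iff_of_disjoint hAne hCne hdisj⟩

/-- For two distinct compatible splits `{A, Aᶜ}`, `{C, Cᶜ}` of `X` with `A ∩ C = ∅`,
all pairs of hypersimplex splits among `S_A, S_{Aᶜ}, S_C, S_{Cᶜ}` are compatible
except possibly `(S_A, S_C)`, which is compatible iff `k = 2` or
`|A ∪ C| ≥ n − k + 2`. -/
theorem stmt13 (n k : ℕ) (hk : 1 < k) (hkn : k < n) (A C : Finset (Fin n))
    (hA : 2 ≤ A.card ∧ A.card ≤ n - k) (hB : 2 ≤ Aᶜ.card ∧ Aᶜ.card ≤ n - k)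
    (hC : 2 ≤ C.card ∧ C.card ≤ n - k) (hD : 2 ≤ Cᶜ.card ∧ Cᶜ.card ≤ n - k)
    (hdist : A ≠ C ∧ A ≠ Cᶜ) (hAC : A ∩ C = ∅) :
    hsCompat n k A Aᶜ ∧ hsCompat n k A Cᶜ ∧ hsCompat n k Aᶜ C ∧
    hsCompat n k Aᶜ Cᶜ ∧ hsCompat n k C Cᶜ ∧
    (hsCompat n k A C ↔ (k = 2 ∨ n - k + 2 ≤ (A ∪ C).card)) :=
  stmt13_general n k hk hkn A C hA hC hAC
end

section
/- Let T = (V, E, l) be a tree with positive edge weights l : E → ℝ_{>0}, no degree-two vertices, and leaves labelled bijectively by X. Define D^k_T(K) for each k-subset K of X as the total weight of the minimal subtree of T spanning the leaves in K. Then D^k_T = ∑_{e∈E} l(e) · δ^k_{S_e}, where S_e is the split of X induced by deleting edge e, and δ^k_{S}(K) = 1 if K meets both blocks of S and 0 otherwise. -/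
open scoped Classical

/-- The total weight of a minimal subtree of `G` spanning the vertices `φ '' K`:
the infimum over all edge sets `E' ⊆ E(G)` connecting all the vertices `φ a`,
`a ∈ K`, of the total weight of `E'`. -/
noncomputable def treeDiss {V X : Type*} (G : SimpleGraph V) (ℓ : Sym2 V → ℝ)
    (φ : X → V) (K : Finset X) : ℝ :=
  sInf {r : ℝ | ∃ E' : Finset (Sym2 V), (↑E' : Set (Sym2 V)) ⊆ G.edgeSet ∧
    (∀ a ∈ K, ∀ b ∈ K,
      (SimpleGraph.fromEdgeSet (↑E' : Set (Sym2 V))).Reachable (φ a) (φ b)) ∧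
    r = ∑ e ∈ E', ℓ e}

/-!
An edge set of a tree connecting the leaves of `K` must contain every edge whose removal
separates two of them. Conversely these separating edges already connect `K`: the unique path
between two leaves consists of separating edges only. Hence the infimum defining `treeDiss` is
attained at the set of separating edges, whose weight is the right-hand side.
-/

namespace SimpleGraph

variable {V X : Type*} {G : SimpleGraph V} {u v : V} {e : Sym2 V}

lemma fromEdgeSet_le_deleteEdges {E s : Set (Sym2 V)} (hE : E ⊆ G.edgeSet \ s) :
    fromEdgeSet E ≤ G.deleteEdges s := by
  rw [← edgeSet_subset_edgeSet, edgeSet_fromEdgeSet, edgeSet_deleteEdges]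
  exact Set.sdiff_subset.trans hE

lemma IsAcyclic.not_reachable_deleteEdges_of_mem_edges (hG : G.IsAcyclic) {p : G.Walk u v}
    (hp : p.IsPath) (he : e ∈ p.edges) : ¬(G.deleteEdges {e}).Reachable u v := by
  rintro ⟨q⟩
  let q' : G.Walk u v := q.mapLe (deleteEdges_le _)
  have hq' : q'.toPath = ⟨p, hp⟩ := (hG.subsingleton_path u v).elim _ _
  have he_q : e ∈ q.edges := by
    rw [← Walk.edges_mapLe_eq_edges (deleteEdges_le {e})]
    apply Walk.edges_toPath_subset_edges
    rw [hq']
    exact he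
  simpa [edgeSet_deleteEdges] using q.edges_subset_edgeSet he_q

lemma IsAcyclic.reachable_fromEdgeSet_of_bridges_subset (hG : G.IsAcyclic) (huv : G.Reachable u v)
    {E : Set (Sym2 V)} (hE : ∀ e ∈ G.edgeSet, ¬(G.deleteEdges {e}).Reachable u v → e ∈ E) :
    (fromEdgeSet E).Reachable u v := by
  obtain ⟨p⟩ := huv
  refine ⟨p.toPath.val.transfer _ fun e he => ?_⟩
  have he_G := p.toPath.val.edges_subset_edgeSet he
  rw [edgeSet_fromEdgeSet]
  exact ⟨hE e he_G (hG.not_reachable_deleteEdges_of_mem_edges p.toPath.2 he),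
    G.not_isDiag_of_mem_edgeSet he_G⟩

noncomputable def separatingEdgeFinset [Fintype G.edgeSet] (f : X → V) (K : Finset X) :
    Finset (Sym2 V) :=
  G.edgeFinset.filter fun e => ∃ a ∈ K, ∃ b ∈ K, ¬(G.deleteEdges {e}).Reachable (f a) (f b)

variable [Fintype G.edgeSet] {f : X → V} {K : Finset X}

lemma separatingEdgeFinset_subset {E : Finset (Sym2 V)} (hE : (E : Set (Sym2 V)) ⊆ G.edgeSet)
    (hconn : ∀ a ∈ K, ∀ b ∈ K, (fromEdgeSet (E : Set (Sym2 V))).Reachable (f a) (f b)) :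
    G.separatingEdgeFinset f K ⊆ E := by
  intro e he
  simp only [separatingEdgeFinset, Finset.mem_filter, mem_edgeFinset] at he
  obtain ⟨-, a, ha, b, hb, hab⟩ := he
  by_contra he_E
  exact hab <| (hconn a ha b hb).mono <| fromEdgeSet_le_deleteEdges fun e' he' =>
    ⟨hE he', fun h => he_E (Set.mem_singleton_iff.mp h ▸ he')⟩

lemma IsTree.reachable_fromEdgeSet_separatingEdgeFinset (hG : G.IsTree) :
    ∀ a ∈ K, ∀ b ∈ K,
      (fromEdgeSet (G.separatingEdgeFinset f K : Set (Sym2 V))).Reachable (f a) (f b) :=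
  fun a ha b hb =>
    hG.isAcyclic.reachable_fromEdgeSet_of_bridges_subset (hG.connected.preconnected _ _)
      fun e he hab => by
        simp only [separatingEdgeFinset, Finset.coe_filter, mem_edgeFinset, Set.mem_ofPred_eq]
        exact ⟨he, a, ha, b, hb, hab⟩

lemma IsTree.treeDiss_eq_sum_separatingEdgeFinset (hG : G.IsTree) {ℓ : Sym2 V → ℝ}
    (hℓ : ∀ e ∈ G.edgeSet, 0 ≤ ℓ e) :
    treeDiss G ℓ f K = ∑ e ∈ G.separatingEdgeFinset f K, ℓ e := by
  refine IsLeast.csInf_eq ⟨⟨_, ?_, hG.reachable_fromEdgeSet_separatingEdgeFinset, rfl⟩, ?_⟩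
  · intro e he
    simp only [separatingEdgeFinset, Finset.coe_filter, mem_edgeFinset] at he
    exact he.1
  · rintro _ ⟨E, hE, hconn, rfl⟩
    exact Finset.sum_le_sum_of_subset_of_nonneg (separatingEdgeFinset_subset hE hconn)
      fun e he _ => hℓ e (hE he)

end SimpleGraph

theorem stmt16_general {V X : Type*} [Fintype V] [DecidableEq V]
    (G : SimpleGraph V) (hT : G.IsTree) (ℓ : Sym2 V → ℝ)
    (hpos : ∀ e ∈ G.edgeSet, 0 < ℓ e)
    (φ : X ≃ {v : V // G.degree v = 1})
    (K : Finset X) :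
    treeDiss G ℓ (fun a => ((φ a : {v : V // G.degree v = 1}) : V)) K =
      ∑ e ∈ G.edgeFinset, ℓ e *
        (if ∃ a ∈ K, ∃ b ∈ K,
            ¬(G.deleteEdges {e}).Reachable ((φ a : {v // G.degree v = 1}) : V)
              ((φ b : {v // G.degree v = 1}) : V)
          then 1 else 0) := by
  rw [hT.treeDiss_eq_sum_separatingEdgeFinset fun e he => (hpos e he).le]
  simp only [SimpleGraph.separatingEdgeFinset, Finset.sum_filter, mul_boole]

/-- For a positively weighted tree `G` with no degree-two vertices and leaves
labelled bijectively by `X`, the k-dissimilarity `D^k_T(K)` (weight of the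
subtree spanned by `K`) equals `∑_e ℓ(e)·δ^k_{S_e}(K)`, where the split `S_e`
separates the leaves on the two sides of `e` (two leaves are on the same side of
`e` iff they are still connected after deleting `e`). -/
theorem stmt16 {V X : Type*} [Fintype V] [Fintype X] [DecidableEq V]
    (G : SimpleGraph V) (hT : G.IsTree) (ℓ : Sym2 V → ℝ)
    (hpos : ∀ e ∈ G.edgeSet, 0 < ℓ e)
    (φ : X ≃ {v : V // G.degree v = 1})
    (hdeg2 : ∀ v : V, G.degree v ≠ 2)
    (k : ℕ) (hk : 2 ≤ k) (hkX : k ≤ Fintype.card X)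
    (K : Finset X) (hK : K.card = k) :
    treeDiss G ℓ (fun a => ((φ a : {v : V // G.degree v = 1}) : V)) K =
      ∑ e ∈ G.edgeFinset, ℓ e *
        (if ∃ a ∈ K, ∃ b ∈ K,
            ¬(G.deleteEdges {e}).Reachable ((φ a : {v // G.degree v = 1}) : V)
              ((φ b : {v // G.degree v = 1}) : V)
          then 1 else 0) :=
  stmt16_general G hT ℓ hpos φ K
end

section
/- Let Z be the point in ℝⁿ with x_i = 1 for i in a fixed (k−ν)-subset B∖{m} of X (m ∈ B removed), x_{i_l} = 1/2 for the 2ν+1 distinct indices i₁,...,i_{2ν+1} and for m, and x_i = 0 otherwise, where B ⊂ X∖⋃_{l=1}^{2ν+1} A_l, |B| = k−ν, and the configuration satisfies i_m ∈ A_l iff m ∈ {l,l+1} mod 2ν+1. Then Z lies in Δ(k,n) (its coordinates sum to k and lie in [0,1]) and it satisfies ∑_{i∈A_l} Z_i = 1 for all l = 1,...,2ν+1, but Z is not a vertex of Δ(k,n). -/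
open scoped Classical

/-!
The point `Z` takes the value `1` on `O = B ∖ {m₀}`, the value `1/2` on the `2ν + 2` points
`H = {m₀, i₁, …, i_{2ν+1}}` and `0` elsewhere; hence its coordinate sum is
`(k - ν - 1) + (ν + 1) = k`. Since `B` avoids every `A_l`, the set `A_l` meets the support of `Z`
exactly in the two half-integral coordinates `i_l ≠ i_{l+1}`, so `∑_{A_l} Z = 1`. Finally
`Z_{m₀} = 1/2`, so `Z` is not a `0/1` point.
-/

open Finset

section HalfIntegralPoint

variable {α : Type*} [DecidableEq α]

noncomputable def halfIntegralPoint (O H : Finset α) (j : α) : ℝ :=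
  if j ∈ O then 1 else if j ∈ H then 1 / 2 else 0

lemma halfIntegralPoint_nonneg_and_le_one (O H : Finset α) (j : α) :
    0 ≤ halfIntegralPoint O H j ∧ halfIntegralPoint O H j ≤ 1 := by
  unfold halfIntegralPoint
  split_ifs <;> norm_num

lemma sum_halfIntegralPoint {O H : Finset α} (hOH : Disjoint O H) (s : Finset α) :
    ∑ j ∈ s, halfIntegralPoint O H j = #(s ∩ O) + #(s ∩ H) / 2 := by
  have hsplit : ∀ j, halfIntegralPoint O H j =
      (if j ∈ O then 1 else 0) + (if j ∈ H then 1 else 0) / 2 := fun j => by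
    unfold halfIntegralPoint
    by_cases hO : j ∈ O
    · simp [hO, disjoint_left.mp hOH hO]
    · by_cases hH : j ∈ H <;> simp [hO, hH]
  simp only [hsplit, sum_add_distrib, ← sum_div, sum_boole, filter_mem_eq_inter]

lemma halfIntegralPoint_ne_indicator {O H : Finset α} {j : α} (hjO : j ∉ O) (hjH : j ∈ H)
    (K : Finset α) : halfIntegralPoint O H ≠ fun j => if j ∈ K then 1 else 0 := by
  intro h
  have hj := congrFun h j
  simp only [halfIntegralPoint, hjO, hjH, if_false, if_true] at hj
  split_ifs at hj <;> norm_num at hj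

end HalfIntegralPoint

lemma Fin.ne_add_one {N : ℕ} [NeZero N] (hN : 1 < N) (l : Fin N) : l ≠ l + 1 := by
  intro h
  have h10 : (1 : Fin N) = 0 := by simpa using h
  simp [Fin.ext_iff, Nat.mod_eq_of_lt hN] at h10

section CyclicConfiguration

variable {β : Type*} [DecidableEq β] {N : ℕ} [NeZero N] {i : Fin N → β} {A : Fin N → Finset β}

lemma inter_insert_image_eq_pair (hmem : ∀ l m, i m ∈ A l ↔ (m = l ∨ m = l + 1))
    {m₀ : β} (hm₀ : ∀ l, m₀ ∉ A l) (l : Fin N) :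
    A l ∩ insert m₀ (univ.image i) = {i l, i (l + 1)} := by
  ext j
  simp only [mem_inter, mem_insert, mem_singleton, mem_image, mem_univ, true_and]
  constructor
  · rintro ⟨hj, rfl | ⟨m, rfl⟩⟩
    · exact absurd hj (hm₀ l)
    · rcases (hmem l m).1 hj with rfl | rfl
      · exact Or.inl rfl
      · exact Or.inr rfl
  · rintro (rfl | rfl)
    · exact ⟨(hmem l l).2 (Or.inl rfl), Or.inr ⟨l, rfl⟩⟩
    · exact ⟨(hmem l (l + 1)).2 (Or.inr rfl), Or.inr ⟨l + 1, rfl⟩⟩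

end CyclicConfiguration

theorem stmt18_general (n k ν : ℕ) (hν : 1 ≤ ν) (hνk : ν < k)
    (i : Fin (2 * ν + 1) → Fin n) (hi : Function.Injective i)
    (A : Fin (2 * ν + 1) → Finset (Fin n))
    (hmem : ∀ l m : Fin (2 * ν + 1), i m ∈ A l ↔ (m = l ∨ m = l + 1))
    (B : Finset (Fin n)) (hB : ∀ l, Disjoint B (A l)) (hBcard : B.card = k - ν)
    (m₀ : Fin n) (hm₀ : m₀ ∈ B) :
    ((∀ j, 0 ≤ (fun j : Fin n => if j ∈ B.erase m₀ then (1 : ℝ)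
        else if j = m₀ ∨ ∃ l, j = i l then 1 / 2 else 0) j ∧
      (fun j : Fin n => if j ∈ B.erase m₀ then (1 : ℝ)
        else if j = m₀ ∨ ∃ l, j = i l then 1 / 2 else 0) j ≤ 1) ∧
      ∑ j, (fun j : Fin n => if j ∈ B.erase m₀ then (1 : ℝ)
        else if j = m₀ ∨ ∃ l, j = i l then 1 / 2 else 0) j = (k : ℝ)) ∧
    (∀ l, ∑ j ∈ A l, (fun j : Fin n => if j ∈ B.erase m₀ then (1 : ℝ)
        else if j = m₀ ∨ ∃ l', j = i l' then 1 / 2 else 0) j = 1) ∧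
    ¬∃ K : Finset (Fin n), K.card = k ∧
      (fun j : Fin n => if j ∈ B.erase m₀ then (1 : ℝ)
        else if j = m₀ ∨ ∃ l, j = i l then 1 / 2 else 0) =
      fun j => if j ∈ K then 1 else 0 := by
  set H := insert m₀ (univ.image i)
  have hZ : (fun j : Fin n => if j ∈ B.erase m₀ then (1 : ℝ)
      else if j = m₀ ∨ ∃ l, j = i l then 1 / 2 else 0) = halfIntegralPoint (B.erase m₀) H := by
    funext j
    simp [halfIntegralPoint, H, eq_comm]
  have hm₀A : ∀ l, m₀ ∉ A l := fun l => disjoint_left.mp (hB l) hm₀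
  have hiB : ∀ l, i l ∉ B := fun l h => disjoint_left.mp (hB l) h ((hmem l l).2 (Or.inl rfl))
  have hBH : Disjoint (B.erase m₀) H := by
    rw [disjoint_left]
    intro j hj hjH
    rcases mem_insert.mp hjH with rfl | hj'
    · exact notMem_erase _ _ hj
    · obtain ⟨l, -, rfl⟩ := mem_image.mp hj'
      exact hiB l (mem_of_mem_erase hj)
  have hHcard : #H = 2 * ν + 2 := by
    have hm₀i : m₀ ∉ univ.image i := by
      rintro hm
      obtain ⟨l, -, rfl⟩ := mem_image.mp hm
      exact hiB l hm₀
    rw [card_insert_of_notMem hm₀i,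
      card_image_of_injective _ hi, card_univ, Fintype.card_fin]
  rw [hZ]
  refine ⟨⟨halfIntegralPoint_nonneg_and_le_one _ _, ?_⟩, fun l => ?_, ?_⟩
  · rw [sum_halfIntegralPoint hBH, univ_inter, univ_inter, card_erase_of_mem hm₀, hBcard, hHcard]
    rw [Nat.sub_sub, Nat.cast_sub (by omega)]
    push_cast
    ring
  · rw [sum_halfIntegralPoint hBH, inter_insert_image_eq_pair hmem hm₀A,
      card_pair (hi.ne (Fin.ne_add_one (by omega) l)),
      (disjoint_iff_inter_eq_empty.mp ((hB l).mono_left (erase_subset _ _)).symm)]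
    norm_num
  · rintro ⟨K, -, hK⟩
    exact halfIntegralPoint_ne_indicator (notMem_erase m₀ B) (mem_insert_self _ _) K hK

/-- The point `Z` (with `Z_i = 1` on `B∖{m₀}`, `Z_i = 1/2` on `{i₁,…,i_{2ν+1}, m₀}`,
`Z_i = 0` otherwise) lies in Δ(k,n), satisfies `∑_{i∈A_l} Z_i = 1` for all `l`,
but is not a vertex of Δ(k,n). -/
theorem stmt18 (n k ν : ℕ) (hν : 1 ≤ ν) (hνk : ν < k) (hkn : k < n)
    (i : Fin (2 * ν + 1) → Fin n) (hi : Function.Injective i)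
    (A : Fin (2 * ν + 1) → Finset (Fin n))
    (hmem : ∀ l m : Fin (2 * ν + 1), i m ∈ A l ↔ (m = l ∨ m = l + 1))
    (B : Finset (Fin n)) (hB : ∀ l, Disjoint B (A l)) (hBcard : B.card = k - ν)
    (m₀ : Fin n) (hm₀ : m₀ ∈ B) :
    ((∀ j, 0 ≤ (fun j : Fin n => if j ∈ B.erase m₀ then (1 : ℝ)
        else if j = m₀ ∨ ∃ l, j = i l then 1 / 2 else 0) j ∧
      (fun j : Fin n => if j ∈ B.erase m₀ then (1 : ℝ)
        else if j = m₀ ∨ ∃ l, j = i l then 1 / 2 else 0) j ≤ 1) ∧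
      ∑ j, (fun j : Fin n => if j ∈ B.erase m₀ then (1 : ℝ)
        else if j = m₀ ∨ ∃ l, j = i l then 1 / 2 else 0) j = (k : ℝ)) ∧
    (∀ l, ∑ j ∈ A l, (fun j : Fin n => if j ∈ B.erase m₀ then (1 : ℝ)
        else if j = m₀ ∨ ∃ l', j = i l' then 1 / 2 else 0) j = 1) ∧
    ¬∃ K : Finset (Fin n), K.card = k ∧
      (fun j : Fin n => if j ∈ B.erase m₀ then (1 : ℝ)
        else if j = m₀ ∨ ∃ l, j = i l then 1 / 2 else 0) =
      fun j => if j ∈ K then 1 else 0 :=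
  stmt18_general n k ν hν hνk i hi A hmem B hB hBcard m₀ hm₀
end
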